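/- Let T be a bounded linear operator on a complex Banach space X, and suppose that for every nonempty relatively open subset U of the spectrum σ(T), the glocal spectral subspace 𝒳_T(closure(U)) is dense in X. If σ(T*) is not a singleton, then the point spectrum of the adjoint T* is empty. -/

import Mathlib

/-!
If `T* φ = μ φ` with `φ ≠ 0`, then `φ` annihilates the range of `T - μ`. As `σ(T*) ⊆ σ(T)` and
`σ(T*) ≠ {μ}`, some `ν ≠ μ` lies in `σ(T)`; a small relatively open neighbourhood `U` of `ν` in
`σ(T)` has `μ ∉ closure U`, so `𝒳_T(closure U) ⊆ ran (T - μ) ⊆ ker φ`, and density forces `φ = 0`.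
-/


open Set Filter Topology Bornology Complex

noncomputable section




variable {X : Type*} [NormedAddCommGroup X] [NormedSpace ℂ X]

/-- The glocal spectral subspace `𝒳_T(F)` of a bounded operator `T`. -/
def glocalSubspace (T : X →L[ℂ] X) (F : Set ℂ) : Set X :=
  {x | ∃ f : ℂ → X, AnalyticOnNhd ℂ f Fᶜ ∧ ∀ z ∈ Fᶜ, T (f z) - z • f z = x}

/-- The local resolvent set `ρ_T(x)`. -/
def localResolventSet (T : X →L[ℂ] X) (x : X) : Set ℂ :=
  ⋃₀ {U : Set ℂ | IsOpen U ∧ ∃ f : ℂ → X, AnalyticOnNhd ℂ f U ∧ ∀ z ∈ U, T (f z) - z • f z = x}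

/-- The local spectrum `σ_T(x)`. -/
def localSpectrum (T : X →L[ℂ] X) (x : X) : Set ℂ := (localResolventSet T x)ᶜ

/-- The local spectral subspace `X_T(F)`. -/
def localSubspace (T : X →L[ℂ] X) (F : Set ℂ) : Set X := {x | localSpectrum T x ⊆ F}

/-- Dunford's property (C). -/
def HasPropertyC (T : X →L[ℂ] X) : Prop :=
  ∀ F : Set ℂ, IsClosed F → IsClosed (localSubspace T F)

/-- The single-valued extension property. -/
def HasSVEP (T : X →L[ℂ] X) : Prop :=
  ∀ U : Set ℂ, IsOpen U → ∀ f : ℂ → X, AnalyticOnNhd ℂ f U →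
    (∀ z ∈ U, T (f z) - z • f z = 0) → ∀ z ∈ U, f z = 0

/-- The point spectrum of an operator. -/
def pointSpectrum (T : X →L[ℂ] X) : Set ℂ := {μ : ℂ | ∃ x : X, x ≠ 0 ∧ T x = μ • x}

/-- The local spectral radius `r_T(x) = limsup_n ‖Tⁿx‖^(1/n)`. -/
def localSpectralRadius (T : X →L[ℂ] X) (x : X) : ℝ :=
  Filter.limsup (fun n : ℕ => ‖(T ^ n) x‖ ^ (1 / (n : ℝ))) Filter.atTop

/-- The adjoint operator `T*` acting on the dual space `X*`. -/
def dualOp (T : X →L[ℂ] X) : StrongDual ℂ X →L[ℂ] StrongDual ℂ X :=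
  (ContinuousLinearMap.compL ℂ X X ℂ).flip T

/-- Restriction of an operator to an invariant subspace. -/
def restrictOp (T : X →L[ℂ] X) (M : Submodule ℂ X) (h : ∀ x ∈ M, T x ∈ M) : M →L[ℂ] M :=
  (T.comp M.subtypeL).codRestrict M (fun x => h x.1 x.2)

/-- The full spectrum `η(K)`: the union of `K` with all the bounded connected
components of its complement. -/
def fullSpectrum (K : Set ℂ) : Set ℂ :=
  K ∪ {z : ℂ | z ∉ K ∧ Bornology.IsBounded (connectedComponentIn Kᶜ z)}

/-- `U` is a nonempty relatively open subset of `σ(T)`. -/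
def RelativelyOpenInSpectrum (T : X →L[ℂ] X) (U : Set ℂ) : Prop :=
  U.Nonempty ∧ ∃ V : Set ℂ, IsOpen V ∧ U = spectrum ℂ T ∩ V

theorem spectrum_op {R A : Type*} [CommSemiring R] [Ring A] [Algebra R A] (a : A) :
    spectrum R (MulOpposite.op a) = spectrum R a := by
  ext r
  simp only [spectrum.mem_iff, MulOpposite.algebraMap_apply, ← MulOpposite.op_sub, isUnit_op]

theorem pointSpectrum_subset_spectrum {Y : Type*} [NormedAddCommGroup Y] [NormedSpace ℂ Y]
    [CompleteSpace Y] (S : Y →L[ℂ] Y) : pointSpectrum S ⊆ spectrum ℂ S := by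
  rintro μ ⟨x, hx, hSx⟩
  rw [ContinuousLinearMap.spectrum_eq]
  exact (Module.End.hasEigenvalue_of_hasEigenvector
    ⟨Module.End.mem_eigenspace_iff.mpr hSx, hx⟩).mem_spectrum

def dualOpAlgHom : (X →L[ℂ] X) →ₐ[ℂ] (StrongDual ℂ X →L[ℂ] StrongDual ℂ X)ᵐᵒᵖ :=
  AlgHom.ofLinearMap
    ((MulOpposite.opLinearEquiv ℂ).toLinearMap ∘ₗ
      (ContinuousLinearMap.compL ℂ X X ℂ).flip.toLinearMap)
    rfl (fun _ _ => rfl)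

theorem spectrum_dualOp_subset (T : X →L[ℂ] X) : spectrum ℂ (dualOp T) ⊆ spectrum ℂ T := by
  rw [← spectrum_op]
  exact AlgHom.spectrum_apply_subset dualOpAlgHom T

theorem glocalSubspace_subset_range_sub_smul (T : X →L[ℂ] X) {F : Set ℂ} {μ : ℂ} (hμ : μ ∉ F) :
    glocalSubspace T F ⊆ Set.range fun y => T y - μ • y :=
  fun _ ⟨f, _, hf⟩ => ⟨f μ, hf μ hμ⟩

theorem apply_sub_smul_eq_zero_of_dualOp_eq_smul {T : X →L[ℂ] X} {φ : StrongDual ℂ X} {μ : ℂ}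
    (hφ : dualOp T φ = μ • φ) (y : X) : φ (T y - μ • y) = 0 := by
  have hφy : φ (T y) = μ * φ y := congrArg (fun ψ : StrongDual ℂ X => ψ y) hφ
  rw [map_sub, map_smul, hφy, smul_eq_mul, sub_self]

theorem exists_relativelyOpenInSpectrum_notMem_closure {T : X →L[ℂ] X} {ν μ : ℂ}
    (hν : ν ∈ spectrum ℂ T) (hνμ : ν ≠ μ) :
    ∃ U, RelativelyOpenInSpectrum T U ∧ μ ∉ closure U := by
  have hr : 0 < dist ν μ / 2 := half_pos (dist_pos.mpr hνμ)
  refine ⟨spectrum ℂ T ∩ Metric.ball ν (dist ν μ / 2),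
    ⟨⟨ν, hν, Metric.mem_ball_self hr⟩, _, Metric.isOpen_ball, rfl⟩, fun hμ => ?_⟩
  have hμν : dist μ ν ≤ dist ν μ / 2 :=
    Metric.closure_ball_subset_closedBall (closure_mono inter_subset_right hμ)
  rw [dist_comm] at hμν
  linarith

theorem adjoint_pointSpectrum_empty_general {X : Type*} [NormedAddCommGroup X] [NormedSpace ℂ X]
    (T : X →L[ℂ] X)
    (hdense : ∀ U : Set ℂ, RelativelyOpenInSpectrum T U →
      Dense (glocalSubspace T (closure U)))
    (hsing : ¬ ∃ μ : ℂ, spectrum ℂ (dualOp T) = {μ}) :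
    pointSpectrum (dualOp T) = ∅ := by
  refine eq_empty_of_forall_notMem fun μ ⟨φ, hφ0, hφ⟩ => hφ0 ?_
  have hμ : μ ∈ spectrum ℂ (dualOp T) := pointSpectrum_subset_spectrum _ ⟨φ, hφ0, hφ⟩
  obtain ⟨ν, hν, hνμ⟩ :=
    ((nontrivial_iff_ne_singleton hμ).mpr fun h => hsing ⟨μ, h⟩).exists_ne μ
  obtain ⟨U, hU, hμU⟩ :=
    exists_relativelyOpenInSpectrum_notMem_closure (spectrum_dualOp_subset T hν) hνμ
  refine ContinuousLinearMap.ext_on ((hdense U hU).mono Submodule.subset_span) ?_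
  rintro _ hx
  obtain ⟨y, rfl⟩ := glocalSubspace_subset_range_sub_smul T hμU hx
  exact apply_sub_smul_eq_zero_of_dualOp_eq_smul hφ y

/-- Under the density assumption on glocal spectral subspaces of `T`, if `σ(T*)` is not a
singleton then the point spectrum of the adjoint `T*` is empty. -/
theorem adjoint_pointSpectrum_empty {X : Type*} [NormedAddCommGroup X] [NormedSpace ℂ X]
    [CompleteSpace X] (T : X →L[ℂ] X)
    (hdense : ∀ U : Set ℂ, RelativelyOpenInSpectrum T U →
      Dense (glocalSubspace T (closure U)))
    (hsing : ¬ ∃ μ : ℂ, spectrum ℂ (dualOp T) = {μ}) :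
    pointSpectrum (dualOp T) = ∅ :=
  adjoint_pointSpectrum_empty_general T hdense hsing

end
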